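/- For all v₀, v₁ ≥ 0, the infimum of the energy ∫₀¹ g(v(t))·(v'(t))² dt over all absolutely continuous paths v : [0,1] → [0,∞) with square-integrable derivative such that v(0) = v₀ and v(1) = v₁ equals (ε/16)·( F(4v₁/ε) − F(4v₀/ε) )². Consequently the induced geodesic distance is d(v₀,v₁) = (√ε/4)·| F(4v₁/ε) − F(4v₀/ε) |; the infimum is attained by the path (v_t)_{t∈[0,1]} determined by F(4v_t/ε) = (1−t)·F(4v₀/ε) + t·F(4v₁/ε), and the map t ↦ v_t is convex. -/

import Mathlib

open MeasureTheory Filter Topology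

noncomputable section

/-- The metric tensor `g(v) = 1/(4√(ε²/16 + v²))` of the Sinkhorn-based metric restricted
to centered one-dimensional Gaussians parametrized by their variance. -/
noncomputable def gG (ε v : ℝ) : ℝ := 1 / (4 * Real.sqrt (ε ^ 2 / 16 + v ^ 2))

/-- `F(x) = ∫₀ˣ (1+s²)^(−1/4) ds`, the antiderivative of `x ↦ (1+x²)^(−1/4)`. -/
noncomputable def FG (x : ℝ) : ℝ := ∫ s in (0:ℝ)..x, (1 + s ^ 2) ^ (-(1 / 4) : ℝ)

/-- A path `v : [0,1] → [0,∞)` is admissible (between `v₀` and `v₁`, with derivative `w`)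
when it is absolutely continuous with square-integrable derivative and has the prescribed
endpoints. -/
def AdmPath (v₀ v₁ : ℝ) (v w : ℝ → ℝ) : Prop :=
  v 0 = v₀ ∧ v 1 = v₁ ∧ (∀ t ∈ Set.Icc (0:ℝ) 1, 0 ≤ v t) ∧
  MeasureTheory.IntegrableOn w (Set.Icc 0 1) ∧
  MeasureTheory.IntegrableOn (fun t => (w t) ^ 2) (Set.Icc 0 1) ∧
  ∀ t ∈ Set.Icc (0:ℝ) 1, v t = v₀ + ∫ s in (0:ℝ)..t, w s

/-- The energy `∫₀¹ g(v(t))·(v'(t))² dt` of a path. -/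
noncomputable def energyG (ε : ℝ) (v w : ℝ → ℝ) : ℝ :=
  ∫ t in Set.Icc (0:ℝ) 1, gG ε (v t) * (w t) ^ 2


/-! Put `ψ(u) = F(4u/ε)`. Then `g = (ε/16)·ψ'²`, so the energy of an admissible path is
`(ε/16)·∫₀¹ ((ψ ∘ v)')²`. The path is absolutely continuous, hence so is `ψ ∘ v` and
`∫₀¹ (ψ ∘ v)' = ψ(v₁) - ψ(v₀)`; Cauchy–Schwarz on `[0,1]` then bounds the energy below by
`(ε/16)·(ψ(v₁) - ψ(v₀))²`. Equality holds along the path on which `ψ(v_t)` is affine in `t`.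
That path is convex because `F` is concave and increasing on `[0,∞)`, so that `F⁻¹` is convex
there; `F` is odd and unbounded, so `F⁻¹` is defined on all of `ℝ`. -/

def FG' (x : ℝ) : ℝ := (1 + x ^ 2) ^ (-(1 / 4) : ℝ)

lemma FG'_pos (x : ℝ) : 0 < FG' x := Real.rpow_pos_of_pos (by positivity) _

lemma FG'_le_one (x : ℝ) : FG' x ≤ 1 :=
  Real.rpow_le_one_of_one_le_of_nonpos (by nlinarith [sq_nonneg x]) (by norm_num)

lemma continuous_FG' : Continuous FG' :=
  (continuous_const.add (continuous_pow 2)).rpow_const fun x =>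
    Or.inl (by positivity : (0:ℝ) < 1 + x ^ 2).ne'

lemma FG'_neg (x : ℝ) : FG' (-x) = FG' x := by simp [FG']

lemma FG'_antitoneOn : AntitoneOn FG' (Set.Ici 0) := fun a ha b _ hab =>
  Real.rpow_le_rpow_of_nonpos (by positivity) (by nlinarith [Set.mem_Ici.1 ha]) (by norm_num)

lemma hasDerivAt_FG (x : ℝ) : HasDerivAt FG (FG' x) x :=
  intervalIntegral.integral_hasDerivAt_right (continuous_FG'.intervalIntegrable _ _)
    (continuous_FG'.stronglyMeasurableAtFilter _ _) continuous_FG'.continuousAt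

lemma continuous_FG : Continuous FG :=
  continuous_iff_continuousAt.2 fun x => (hasDerivAt_FG x).continuousAt

lemma strictMono_FG : StrictMono FG :=
  strictMono_of_hasDerivAt_pos hasDerivAt_FG FG'_pos

lemma FG_zero : FG 0 = 0 := intervalIntegral.integral_same

lemma FG_neg (x : ℝ) : FG (-x) = -FG x := by
  have h := intervalIntegral.integral_comp_neg (a := 0) (b := x) FG'
  simp only [FG'_neg, neg_zero] at h
  change ∫ s in (0:ℝ)..-x, FG' s = -∫ s in (0:ℝ)..x, FG' s
  rw [h, intervalIntegral.integral_symm]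

lemma mul_FG'_le_FG {x : ℝ} (hx : 0 ≤ x) : x * FG' x ≤ FG x := by
  have h := intervalIntegral.integral_mono_on (μ := volume) hx intervalIntegrable_const
    (continuous_FG'.intervalIntegrable 0 x) fun s hs => FG'_antitoneOn hs.1 hx hs.2
  exact (by simpa using h : x * FG' x ≤ ∫ u in (0:ℝ)..x, FG' u)

lemma inv_sqrt_le_FG' {x : ℝ} (hx : 0 ≤ x) : (√(1 + x))⁻¹ ≤ FG' x := by
  have h : (1 + x ^ 2) ^ (1 / 4 : ℝ) ≤ √(1 + x) :=
    calc (1 + x ^ 2) ^ (1 / 4 : ℝ) ≤ ((1 + x) ^ 2) ^ (1 / 4 : ℝ) :=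
          Real.rpow_le_rpow (by positivity) (by nlinarith) (by norm_num)
      _ = √(1 + x) := by
          rw [Real.sqrt_eq_rpow, ← Real.rpow_natCast, ← Real.rpow_mul (by positivity)]
          norm_num
  rw [FG', Real.rpow_neg (by positivity)]
  exact inv_anti₀ (by positivity) h

lemma tendsto_FG_atTop : Tendsto FG atTop atTop := by
  have hsqrt : Tendsto (fun x : ℝ => √(1 + x) / 2) atTop atTop :=
    (Real.tendsto_sqrt_atTop.comp (tendsto_atTop_add_const_left _ 1 tendsto_id)).atTop_div_const
      (by norm_num)
  refine tendsto_atTop_mono' atTop ?_ hsqrt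
  filter_upwards [eventually_ge_atTop (1 : ℝ)] with x hx
  have hs : √(1 + x) ^ 2 = 1 + x := Real.sq_sqrt (by linarith)
  have hpos : 0 < √(1 + x) := Real.sqrt_pos.2 (by linarith)
  calc √(1 + x) / 2 ≤ x * (√(1 + x))⁻¹ := by
        rw [← div_eq_mul_inv, le_div_iff₀ hpos]; nlinarith
    _ ≤ x * FG' x := mul_le_mul_of_nonneg_left (inv_sqrt_le_FG' (by linarith)) (by linarith)
    _ ≤ FG x := mul_FG'_le_FG (by linarith)

lemma tendsto_FG_atBot : Tendsto FG atBot atBot := by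
  have h := tendsto_neg_atTop_atBot.comp (tendsto_FG_atTop.comp tendsto_neg_atBot_atTop)
  refine h.congr fun x => ?_
  simp [FG_neg]

lemma surjective_FG : Function.Surjective FG :=
  continuous_FG.surjective tendsto_FG_atTop tendsto_FG_atBot

def FGinv : ℝ → ℝ :=
  (StrictMono.orderIsoOfSurjective FG strictMono_FG surjective_FG).symm

lemma FG_FGinv (y : ℝ) : FG (FGinv y) = y :=
  StrictMono.orderIsoOfSurjective_self_symm_apply FG strictMono_FG surjective_FG y

lemma FGinv_FG (x : ℝ) : FGinv (FG x) = x :=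
  StrictMono.orderIsoOfSurjective_symm_apply_self FG strictMono_FG surjective_FG x

lemma monotone_FGinv : Monotone FGinv :=
  (StrictMono.orderIsoOfSurjective FG strictMono_FG surjective_FG).symm.monotone

lemma continuous_FGinv : Continuous FGinv :=
  (StrictMono.orderIsoOfSurjective FG strictMono_FG surjective_FG).symm.continuous

lemma FG_nonneg {x : ℝ} (hx : 0 ≤ x) : 0 ≤ FG x :=
  FG_zero ▸ strictMono_FG.monotone hx

lemma FGinv_nonneg {y : ℝ} (hy : 0 ≤ y) : 0 ≤ FGinv y :=
  calc 0 = FGinv (FG 0) := (FGinv_FG 0).symm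
    _ ≤ FGinv y := monotone_FGinv (by rwa [FG_zero])

lemma hasDerivAt_FGinv (y : ℝ) : HasDerivAt FGinv (FG' (FGinv y))⁻¹ y :=
  HasDerivAt.of_local_left_inverse continuous_FGinv.continuousAt (hasDerivAt_FG _)
    (FG'_pos _).ne' (Eventually.of_forall FG_FGinv)

/-- `FG` is concave and increasing on `[0, ∞)`, so its inverse is convex there. -/
lemma convexOn_FGinv : ConvexOn ℝ (Set.Ici 0) FGinv := by
  refine MonotoneOn.convexOn_of_deriv (convex_Ici 0) continuous_FGinv.continuousOn
    (fun y _ => (hasDerivAt_FGinv y).differentiableAt.differentiableWithinAt) ?_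
  rw [funext fun y => (hasDerivAt_FGinv y).deriv, interior_Ici]
  intro y hy z _ hyz
  have hy' := FGinv_nonneg (le_of_lt hy)
  exact inv_anti₀ (FG'_pos _) (FG'_antitoneOn hy' (hy'.trans (monotone_FGinv hyz))
    (monotone_FGinv hyz))

lemma LipschitzWith.comp_absolutelyContinuousOnInterval {ψ f : ℝ → ℝ} {K : NNReal} {a b : ℝ}
    (hψ : LipschitzWith K ψ) (hf : AbsolutelyContinuousOnInterval f a b) :
    AbsolutelyContinuousOnInterval (ψ ∘ f) a b := by
  refine squeeze_zero (fun _ => Finset.sum_nonneg fun _ _ => dist_nonneg) (fun E => ?_)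
    (by simpa using Tendsto.const_mul (K : ℝ) hf)
  rw [Finset.mul_sum]
  exact Finset.sum_le_sum fun i _ => hψ.dist_le_mul _ _

lemma AbsolutelyContinuousOnInterval.integral_comp_mul_deriv {ψ ψ' v : ℝ → ℝ} {K : NNReal}
    {a b : ℝ} (hv : AbsolutelyContinuousOnInterval v a b) (hψ : ∀ x, HasDerivAt ψ (ψ' x) x)
    (hψK : LipschitzWith K ψ) :
    ∫ t in a..b, ψ' (v t) * deriv v t = ψ (v b) - ψ (v a) := by
  refine (hψK.comp_absolutelyContinuousOnInterval hv).integral_deriv_eq_sub ▸ ?_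
  refine intervalIntegral.integral_congr_ae ?_
  filter_upwards [hv.ae_differentiableAt] with t ht htab
  exact (((hψ (v t)).comp t (ht (Set.uIoc_subset_uIcc htab)).hasDerivAt).deriv).symm

lemma sq_integral_le_integral_sq {Ω : Type*} [MeasurableSpace Ω] {μ : Measure Ω}
    [IsProbabilityMeasure μ] {f : Ω → ℝ} (hf : MemLp f 2 μ) :
    (∫ x, f x ∂μ) ^ 2 ≤ ∫ x, f x ^ 2 ∂μ := by
  have h := ProbabilityTheory.variance_nonneg f μ
  rw [ProbabilityTheory.variance_eq_sub hf] at h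
  simpa using h

section AdmPath

variable {v₀ v₁ : ℝ} {v w : ℝ → ℝ}

lemma AdmPath.intervalIntegrable (h : AdmPath v₀ v₁ v w) : IntervalIntegrable w volume 0 1 :=
  (intervalIntegrable_iff_integrableOn_Icc_of_le zero_le_one).2 h.2.2.2.1

lemma AdmPath.memLp_two (h : AdmPath v₀ v₁ v w) : MemLp w 2 (volume.restrict (Set.Icc 0 1)) :=
  (memLp_two_iff_integrable_sq h.2.2.2.1.aestronglyMeasurable).2 h.2.2.2.2.1

lemma AdmPath.absolutelyContinuousOnInterval_primitive (h : AdmPath v₀ v₁ v w) :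
    AbsolutelyContinuousOnInterval (fun t => v₀ + ∫ s in (0:ℝ)..t, w s) 0 1 :=
  (LipschitzWith.const v₀).lipschitzOnWith.absolutelyContinuousOnInterval.fun_add
    (h.intervalIntegrable.absolutelyContinuousOnInterval_intervalIntegral (by simp))

lemma AdmPath.continuousOn (h : AdmPath v₀ v₁ v w) : ContinuousOn v (Set.Icc 0 1) := by
  have hV := h.absolutelyContinuousOnInterval_primitive.continuousOn
  rw [Set.uIcc_of_le zero_le_one] at hV
  exact hV.congr h.2.2.2.2.2

lemma AdmPath.integral_comp_mul_eq_sub (h : AdmPath v₀ v₁ v w) {ψ ψ' : ℝ → ℝ} {K : NNReal}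
    (hψ : ∀ x, HasDerivAt ψ (ψ' x) x) (hψK : LipschitzWith K ψ) :
    ∫ t in Set.Icc 0 1, ψ' (v t) * w t = ψ v₁ - ψ v₀ := by
  have hderiv : ∀ᵐ t, t ∈ Set.Icc 0 1 → deriv (fun t => v₀ + ∫ s in (0:ℝ)..t, w s) t = w t := by
    filter_upwards [h.intervalIntegrable.ae_hasDerivAt_integral] with t ht htI
    rw [← Set.uIcc_of_le zero_le_one] at htI
    exact ((ht htI 0 (by simp)).const_add v₀).deriv
  have hchain := h.absolutelyContinuousOnInterval_primitive.integral_comp_mul_deriv hψ hψK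
  obtain ⟨-, hv1, -, -, -, hvw⟩ := h
  rw [intervalIntegral.integral_same, add_zero, ← hvw 1 (by simp), hv1,
    intervalIntegral.integral_of_le zero_le_one] at hchain
  rw [integral_Icc_eq_integral_Ioc, ← hchain]
  refine setIntegral_congr_ae measurableSet_Ioc ?_
  filter_upwards [hderiv] with t ht htI
  rw [ht (Set.Ioc_subset_Icc_self htI), hvw t (Set.Ioc_subset_Icc_self htI)]

end AdmPath

section ScaledFG

variable {ε : ℝ}

def scaledFG (ε u : ℝ) : ℝ := FG (4 * u / ε)

def scaledFG' (ε u : ℝ) : ℝ := 4 / ε * FG' (4 * u / ε)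

lemma hasDerivAt_scaledFG (u : ℝ) : HasDerivAt (scaledFG ε) (scaledFG' ε u) u := by
  have h := (hasDerivAt_FG (4 * u / ε)).comp u (((hasDerivAt_id u).const_mul 4).div_const ε)
  rw [scaledFG', mul_comm]
  simp only [mul_one] at h
  exact h

lemma continuous_scaledFG' : Continuous (scaledFG' ε) :=
  continuous_const.mul (continuous_FG'.comp (by fun_prop))

lemma norm_scaledFG'_le (hε : 0 < ε) (u : ℝ) : ‖scaledFG' ε u‖ ≤ 4 / ε := by
  rw [scaledFG', norm_mul, Real.norm_of_nonneg (FG'_pos _).le, Real.norm_of_nonneg (by positivity)]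
  exact mul_le_of_le_one_right (by positivity) (FG'_le_one _)

lemma lipschitzWith_scaledFG (hε : 0 < ε) : LipschitzWith (Real.toNNReal (4 / ε)) (scaledFG ε) :=
  lipschitzWith_of_nnnorm_deriv_le (fun u => (hasDerivAt_scaledFG u).differentiableAt) fun u => by
    rw [← NNReal.coe_le_coe, coe_nnnorm, (hasDerivAt_scaledFG u).deriv,
      Real.coe_toNNReal _ (by positivity)]
    exact norm_scaledFG'_le hε u

lemma gG_eq_mul_sq_scaledFG' (hε : 0 < ε) (u : ℝ) : gG ε u = ε / 16 * scaledFG' ε u ^ 2 := by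
  have hsq : FG' (4 * u / ε) ^ 2 = (√(1 + (4 * u / ε) ^ 2))⁻¹ := by
    rw [FG', ← Real.rpow_natCast, ← Real.rpow_mul (by positivity), Real.sqrt_eq_rpow,
      ← Real.rpow_neg (by positivity)]
    norm_num
  have hsqrt : √(1 + (4 * u / ε) ^ 2) = 4 / ε * √(ε ^ 2 / 16 + u ^ 2) := by
    rw [show 1 + (4 * u / ε) ^ 2 = (4 / ε) ^ 2 * (ε ^ 2 / 16 + u ^ 2) by field_simp; ring,
      Real.sqrt_mul (sq_nonneg _), Real.sqrt_sq (by positivity)]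
  rw [gG, scaledFG', mul_pow, hsq, hsqrt]
  field_simp
  ring

end ScaledFG

lemma AdmPath.energyG_ge {ε v₀ v₁ : ℝ} {v w : ℝ → ℝ} (hε : 0 < ε) (h : AdmPath v₀ v₁ v w) :
    ε / 16 * (FG (4 * v₁ / ε) - FG (4 * v₀ / ε)) ^ 2 ≤ energyG ε v w := by
  let μ := volume.restrict (Set.Icc (0:ℝ) 1)
  have : IsProbabilityMeasure μ := ⟨by simp [μ]⟩
  have hmeas : AEStronglyMeasurable (fun t => scaledFG' ε (v t) * w t) μ :=
    ((continuous_scaledFG'.comp_continuousOn h.continuousOn).aestronglyMeasurable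
      measurableSet_Icc).mul h.2.2.2.1.aestronglyMeasurable
  have hmemLp : MemLp (fun t => scaledFG' ε (v t) * w t) 2 μ :=
    h.memLp_two.of_le_mul (c := 4 / ε) hmeas <| Eventually.of_forall fun t => by
      rw [norm_mul]
      exact mul_le_mul_of_nonneg_right (norm_scaledFG'_le hε _) (norm_nonneg _)
  have henergy : energyG ε v w = ε / 16 * ∫ t, (scaledFG' ε (v t) * w t) ^ 2 ∂μ := by
    rw [energyG, ← integral_const_mul]
    refine integral_congr_ae (Eventually.of_forall fun t => ?_)
    simp only [gG_eq_mul_sq_scaledFG' hε]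
    ring
  have hFTC := h.integral_comp_mul_eq_sub hasDerivAt_scaledFG (lipschitzWith_scaledFG hε)
  simp only [scaledFG] at hFTC
  rw [henergy, ← hFTC]
  exact mul_le_mul_of_nonneg_left (sq_integral_le_integral_sq hmemLp) (by positivity)

section Geodesic

variable {ε a b : ℝ}

/-- `a` and `b` are the values of `FG (4 v / ε)` at the endpoints, not the endpoints. -/
def geodesic (ε a b t : ℝ) : ℝ := ε / 4 * FGinv (AffineMap.lineMap a b t)

def geodesicDeriv (ε a b t : ℝ) : ℝ :=
  ε / 4 * ((FG' (FGinv (AffineMap.lineMap a b t)))⁻¹ * (b - a))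

lemma hasDerivAt_geodesic (t : ℝ) : HasDerivAt (geodesic ε a b) (geodesicDeriv ε a b t) t :=
  ((hasDerivAt_FGinv _).comp t AffineMap.hasDerivAt_lineMap).const_mul (ε / 4)

lemma continuous_geodesicDeriv : Continuous (geodesicDeriv ε a b) := by
  have hX : Continuous fun t => FGinv (AffineMap.lineMap a b t) :=
    continuous_FGinv.comp (AffineMap.lineMap_continuous (R := ℝ))
  exact continuous_const.mul
    (((continuous_FG'.comp hX).inv₀ fun t => (FG'_pos _).ne').mul continuous_const)

lemma FG_geodesic (hε : ε ≠ 0) (t : ℝ) :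
    FG (4 * geodesic ε a b t / ε) = AffineMap.lineMap a b t := by
  rw [geodesic, show 4 * (ε / 4 * FGinv _) / ε = FGinv (AffineMap.lineMap a b t) by field_simp,
    FG_FGinv]

lemma scaledFG'_geodesic_mul (hε : ε ≠ 0) (t : ℝ) :
    scaledFG' ε (geodesic ε a b t) * geodesicDeriv ε a b t = b - a := by
  rw [scaledFG', geodesic, geodesicDeriv,
    show 4 * (ε / 4 * FGinv _) / ε = FGinv (AffineMap.lineMap a b t) by field_simp]
  field_simp [(FG'_pos _).ne']

lemma lineMap_nonneg (ha : 0 ≤ a) (hb : 0 ≤ b) {t : ℝ} (ht : t ∈ Set.Icc 0 1) :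
    0 ≤ AffineMap.lineMap a b t := by
  rw [AffineMap.lineMap_apply_module, smul_eq_mul, smul_eq_mul]
  nlinarith [ht.1, ht.2]

lemma geodesic_nonneg (ha : 0 ≤ a) (hb : 0 ≤ b) (hε : 0 ≤ ε) {t : ℝ} (ht : t ∈ Set.Icc 0 1) :
    0 ≤ geodesic ε a b t :=
  mul_nonneg (by positivity) (FGinv_nonneg (lineMap_nonneg ha hb ht))

lemma convexOn_geodesic (ha : 0 ≤ a) (hb : 0 ≤ b) (hε : 0 ≤ ε) :
    ConvexOn ℝ (Set.Icc 0 1) (geodesic ε a b) := by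
  refine ((convexOn_FGinv.comp_affineMap (AffineMap.lineMap a b)).subset (fun t ht => ?_)
    (convex_Icc 0 1)).smul (by positivity : 0 ≤ ε / 4)
  exact lineMap_nonneg ha hb ht

lemma energyG_geodesic (hε : 0 < ε) :
    energyG ε (geodesic ε a b) (geodesicDeriv ε a b) = ε / 16 * (b - a) ^ 2 := by
  have hconst : ∀ t, gG ε (geodesic ε a b t) * geodesicDeriv ε a b t ^ 2 = ε / 16 * (b - a) ^ 2 :=
    fun t => by rw [gG_eq_mul_sq_scaledFG' hε, mul_assoc, ← mul_pow, scaledFG'_geodesic_mul hε.ne']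
  simp [energyG, hconst]

lemma admPath_geodesic {v₀ v₁ : ℝ} (hε : 0 < ε) (h₀ : 0 ≤ v₀) (h₁ : 0 ≤ v₁) :
    AdmPath v₀ v₁ (geodesic ε (FG (4 * v₀ / ε)) (FG (4 * v₁ / ε)))
      (geodesicDeriv ε (FG (4 * v₀ / ε)) (FG (4 * v₁ / ε))) := by
  have h0 : geodesic ε (FG (4 * v₀ / ε)) (FG (4 * v₁ / ε)) 0 = v₀ := by
    rw [geodesic, AffineMap.lineMap_apply_zero, FGinv_FG]
    field_simp
  have h1 : geodesic ε (FG (4 * v₀ / ε)) (FG (4 * v₁ / ε)) 1 = v₁ := by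
    rw [geodesic, AffineMap.lineMap_apply_one, FGinv_FG]
    field_simp
  refine ⟨h0, h1, fun t ht => geodesic_nonneg (FG_nonneg (by positivity))
    (FG_nonneg (by positivity)) hε.le ht, continuous_geodesicDeriv.integrableOn_Icc,
    (continuous_geodesicDeriv.pow 2).integrableOn_Icc, fun t _ => ?_⟩
  rw [intervalIntegral.integral_eq_sub_of_hasDerivAt (fun s _ => hasDerivAt_geodesic s)
    (continuous_geodesicDeriv.intervalIntegrable 0 t), h0]
  ring

end Geodesic

/-- **Geodesic distance on one-dimensional Gaussians.** For `v₀, v₁ ≥ 0`, the infimum of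
the energy `∫₀¹ g(v)·(v')² dt` over admissible paths from `v₀` to `v₁` equals
`(ε/16)·(F(4v₁/ε) − F(4v₀/ε))²`; hence the induced geodesic distance is
`(√ε/4)·|F(4v₁/ε) − F(4v₀/ε)|`. The infimum is attained by the path determined by
`F(4v_t/ε) = (1−t)F(4v₀/ε) + tF(4v₁/ε)`, and `t ↦ v_t` is convex. -/
theorem stmt13 (ε : ℝ) (hε : 0 < ε) (v₀ v₁ : ℝ) (h₀ : 0 ≤ v₀) (h₁ : 0 ≤ v₁) :
    sInf {e : ℝ | ∃ v w, AdmPath v₀ v₁ v w ∧ e = energyG ε v w}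
      = (ε / 16) * (FG (4 * v₁ / ε) - FG (4 * v₀ / ε)) ^ 2 ∧
    Real.sqrt (sInf {e : ℝ | ∃ v w, AdmPath v₀ v₁ v w ∧ e = energyG ε v w})
      = (Real.sqrt ε / 4) * |FG (4 * v₁ / ε) - FG (4 * v₀ / ε)| ∧
    ∃ v w, AdmPath v₀ v₁ v w ∧
      energyG ε v w = (ε / 16) * (FG (4 * v₁ / ε) - FG (4 * v₀ / ε)) ^ 2 ∧
      (∀ t ∈ Set.Icc (0:ℝ) 1,
        FG (4 * v t / ε) = (1 - t) * FG (4 * v₀ / ε) + t * FG (4 * v₁ / ε)) ∧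
      ConvexOn ℝ (Set.Icc 0 1) v := by
  have hadm := admPath_geodesic hε h₀ h₁
  have hinf : sInf {e : ℝ | ∃ v w, AdmPath v₀ v₁ v w ∧ e = energyG ε v w}
      = ε / 16 * (FG (4 * v₁ / ε) - FG (4 * v₀ / ε)) ^ 2 := by
    refine IsLeast.csInf_eq ⟨⟨_, _, hadm, (energyG_geodesic hε).symm⟩, ?_⟩
    rintro _ ⟨v, w, h, rfl⟩
    exact h.energyG_ge hε
  refine ⟨hinf, ?_, _, _, hadm, energyG_geodesic hε, fun t _ => ?_,
    convexOn_geodesic (FG_nonneg (by positivity)) (FG_nonneg (by positivity)) hε.le⟩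
  · rw [hinf, Real.sqrt_mul (by positivity), Real.sqrt_sq_eq_abs, Real.sqrt_div hε.le,
      show (16 : ℝ) = 4 ^ 2 by norm_num, Real.sqrt_sq (by norm_num)]
  · rw [FG_geodesic hε.ne', AffineMap.lineMap_apply_module, smul_eq_mul, smul_eq_mul]
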